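/- arXiv:2106.05850 — 2 statements merged into one kernel-verified Lean document; each statement's English description precedes it below -/
import Mathlib

section
/- Let T_{ij}, for 1 ≤ i ≤ n₁ and 1 ≤ j ≤ n₂, be independent Bernoulli random variables with P(T_{ij}=1) = π_{ij}, where 0 < π_L ≤ π_{ij} ≤ 1 for all i,j. Then P( Σ_{i,j} T_{ij}/π_{ij}² ≥ 2 Σ_{i,j} 1/π_{ij} ) ≤ exp( −(log 2)/2 · π_L² · Σ_{i,j} 1/π_{ij} ). -/
open MeasureTheory ProbabilityTheory

/-!
Chernoff's bound at `t = log 2 · π_L²`. The summand `T_{ij}/π_{ij}²` has moment generating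
function `1 + π_{ij} (exp s - 1)` at `t`, with `s = t/π_{ij}² ≤ log 2`; on `[0, log 2]` the
exponential lies below its chord, `exp s - 1 ≤ s / log 2`, so this is at most
`1 + π_L²/π_{ij} ≤ exp (π_L²/π_{ij})`. Independence multiplies these bounds, and with
`S = Σ 1/π_{ij}` the tail is at most
`exp ((1 - 2 log 2) π_L² S) ≤ exp (-(log 2 / 2) π_L² S)` because `log 2 ≥ 2/3`.
-/

section

open Real

lemma Real.exp_le_one_add_mul_div_of_le {x c : ℝ} (hx : 0 ≤ x) (hxc : x ≤ c) (hc : 0 < c) :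
    exp x ≤ 1 + x * (exp c - 1) / c := by
  have hconv := convexOn_exp.2 (Set.mem_univ 0) (Set.mem_univ c)
    (sub_nonneg.2 ((div_le_one hc).2 hxc)) (div_nonneg hx hc.le) (sub_add_cancel 1 (x / c))
  simp only [smul_eq_mul, mul_zero, zero_add, exp_zero, div_mul_cancel₀ x hc.ne'] at hconv
  calc exp x ≤ (1 - x / c) * 1 + x / c * exp c := hconv
    _ = 1 + x * (exp c - 1) / c := by ring

lemma Real.exp_sub_one_le_div_log_two {x : ℝ} (hx : 0 ≤ x) (hx2 : x ≤ log 2) :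
    exp x - 1 ≤ x / log 2 := by
  have h := exp_le_one_add_mul_div_of_le hx hx2 (log_pos one_lt_two)
  rw [exp_log two_pos] at h
  linarith [show x * (2 - 1) / log 2 = x / log 2 by ring]

namespace ProbabilityTheory

variable {Ω : Type*} [MeasurableSpace Ω] {μ : Measure Ω}

lemma mgf_of_zero_or_one [IsProbabilityMeasure μ] {X : Ω → ℝ} (hX : Measurable X)
    (h01 : ∀ ω, X ω = 0 ∨ X ω = 1) (t : ℝ) :
    mgf X μ t = 1 + μ.real {ω | X ω = 1} * (exp t - 1) := by
  have hE : MeasurableSet {ω | X ω = 1} := hX (measurableSet_singleton 1)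
  have hexp : (fun ω => exp (t * X ω))
      = fun ω => 1 + (exp t - 1) * {ω | X ω = 1}.indicator 1 ω := by
    funext ω
    rcases h01 ω with h | h <;> simp [Set.indicator, h]
  rw [mgf, hexp,
    integral_add (integrable_const 1) (((integrable_const 1).indicator hE).const_mul _),
    integral_const, integral_const_mul, integral_indicator_one hE]
  simp [mul_comm]

lemma mgf_div_sq_le_exp [IsProbabilityMeasure μ] {X : Ω → ℝ} (hX : Measurable X)
    (h01 : ∀ ω, X ω = 0 ∨ X ω = 1) {p a : ℝ} (hp : μ.real {ω | X ω = 1} = p)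
    (ha : 0 < a) (hap : a ≤ p) :
    mgf (fun ω => X ω / p ^ 2) μ (log 2 * a ^ 2) ≤ exp (a ^ 2 * p⁻¹) := by
  have hp0 : 0 < p := ha.trans_le hap
  set s := (p ^ 2)⁻¹ * (log 2 * a ^ 2) with hs_def
  have hs : s ≤ log 2 := by
    have : a ^ 2 ≤ p ^ 2 := by gcongr
    rw [inv_mul_le_iff₀ (by positivity)]
    nlinarith [log_pos one_lt_two]
  have hchord := exp_sub_one_le_div_log_two (by positivity) hs
  calc mgf (fun ω => X ω / p ^ 2) μ (log 2 * a ^ 2)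
      = 1 + p * (exp s - 1) := by
        simp_rw [div_eq_inv_mul]
        rw [mgf_const_mul, mgf_of_zero_or_one hX h01, hp]
    _ ≤ 1 + p * (s / log 2) := by gcongr
    _ = 1 + a ^ 2 * p⁻¹ := by
        have := (log_pos one_lt_two).ne'
        rw [hs_def]
        field_simp
    _ ≤ exp (a ^ 2 * p⁻¹) := by linarith [add_one_le_exp (a ^ 2 * p⁻¹)]

theorem measure_sum_ge_le_of_mgf_le {ι : Type*} {X : ι → Ω → ℝ} (h_indep : iIndepFun X μ)
    (h_meas : ∀ i, Measurable (X i)) {s : Finset ι} {t : ℝ} (ht : 0 ≤ t)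
    (h_int : ∀ i ∈ s, Integrable (fun ω => exp (t * X i ω)) μ) {c : ι → ℝ}
    (h_mgf : ∀ i ∈ s, mgf (X i) μ t ≤ exp (c i)) (ε : ℝ) :
    μ.real {ω | ε ≤ ∑ i ∈ s, X i ω} ≤ exp (-t * ε + ∑ i ∈ s, c i) := by
  have := h_indep.isProbabilityMeasure
  have h_sum : (fun ω => ∑ i ∈ s, X i ω) = ∑ i ∈ s, X i := by
    funext ω; rw [Finset.sum_apply]
  calc μ.real {ω | ε ≤ ∑ i ∈ s, X i ω}
      ≤ exp (-t * ε) * mgf (fun ω => ∑ i ∈ s, X i ω) μ t :=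
        measure_ge_le_exp_mul_mgf ε ht
          (by simpa only [Finset.sum_apply] using h_indep.integrable_exp_mul_sum h_meas h_int)
    _ = exp (-t * ε) * ∏ i ∈ s, mgf (X i) μ t := by rw [h_sum, h_indep.mgf_sum h_meas]
    _ ≤ exp (-t * ε) * ∏ i ∈ s, exp (c i) := by
        gcongr with i hi
        exacts [fun _ _ => mgf_nonneg, h_mgf i hi]
    _ = exp (-t * ε + ∑ i ∈ s, c i) := by rw [exp_add, exp_sum]

end ProbabilityTheory

end

theorem frobenius_tail_bound
    {Ω : Type*} [MeasurableSpace Ω] (μ : Measure Ω) [IsProbabilityMeasure μ]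
    (n₁ n₂ : ℕ)
    (T : Fin n₁ → Fin n₂ → Ω → ℝ)
    (π : Fin n₁ → Fin n₂ → ℝ) (πL : ℝ) (hπL : 0 < πL)
    (hπ : ∀ i j, πL ≤ π i j ∧ π i j ≤ 1)
    (hTmeas : ∀ i j, Measurable (T i j))
    (hT01 : ∀ i j ω, T i j ω = 0 ∨ T i j ω = 1)
    (hprob : ∀ i j, μ {ω | T i j ω = 1} = ENNReal.ofReal (π i j))
    (hindep : iIndepFun (β := fun _ : Fin n₁ × Fin n₂ => ℝ)
      (fun p ω => T p.1 p.2 ω) μ) :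
    μ {ω | 2 * ∑ i, ∑ j, (π i j)⁻¹ ≤ ∑ i, ∑ j, T i j ω / (π i j) ^ 2}
      ≤ ENNReal.ofReal
        (Real.exp (-(Real.log 2 / 2) * πL ^ 2 * ∑ i, ∑ j, (π i j)⁻¹)) := by
  set S := ∑ i, ∑ j, (π i j)⁻¹ with hS
  have hπ_pos : ∀ i j, 0 < π i j := fun i j => hπL.trans_le (hπ i j).1
  have hS_nonneg : 0 ≤ S :=
    Finset.sum_nonneg fun i _ => Finset.sum_nonneg fun j _ => inv_nonneg.2 (hπ_pos i j).le
  set t := Real.log 2 * πL ^ 2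
  let Y : Fin n₁ × Fin n₂ → Ω → ℝ := fun p ω => T p.1 p.2 ω / π p.1 p.2 ^ 2
  have hY_indep : iIndepFun Y μ :=
    hindep.comp (fun p (x : ℝ) => x / π p.1 p.2 ^ 2) fun _ => measurable_id.div_const _
  have hY_meas : ∀ p, Measurable (Y p) := fun p => (hTmeas p.1 p.2).div_const _
  have hY_int : ∀ p ∈ Finset.univ, Integrable (fun ω => Real.exp (t * Y p ω)) μ := by
    refine fun p _ => integrable_exp_mul_of_le t (π p.1 p.2 ^ 2)⁻¹ (by positivity)
      (hY_meas p).aemeasurable (ae_of_all _ fun ω => ?_)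
    rcases hT01 p.1 p.2 ω with h | h <;> simp [Y, h, sq_nonneg]
  have hY_mgf : ∀ p ∈ Finset.univ, mgf (Y p) μ t ≤ Real.exp (πL ^ 2 * (π p.1 p.2)⁻¹) :=
    fun p _ => mgf_div_sq_le_exp (hTmeas p.1 p.2) (hT01 p.1 p.2)
      (by rw [measureReal_def, hprob, ENNReal.toReal_ofReal (hπ_pos p.1 p.2).le])
      hπL (hπ p.1 p.2).1
  have hchernoff :=
    measure_sum_ge_le_of_mgf_le hY_indep hY_meas (by positivity) hY_int hY_mgf (2 * S)
  simp only [Y, ← Finset.mul_sum, Fintype.sum_prod_type, ← hS] at hchernoff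
  have hlog : 2 / 3 ≤ Real.log 2 := by linarith [Real.log_two_gt_d9]
  rw [← ofReal_measureReal]
  refine ENNReal.ofReal_le_ofReal (hchernoff.trans (Real.exp_le_exp.2 ?_))
  nlinarith [mul_nonneg (sq_nonneg πL) hS_nonneg]
end

section
/- For any matrix B ∈ ℝ^{n₁×n₂}, the nuclear norm satisfies ‖B‖_* ≤ √(n₁n₂) · ‖B‖_max, where ‖B‖_max = inf{‖U‖_{2,∞}‖V‖_{2,∞} : B = UVᵀ}. -/
open scoped BigOperators

/-- Spectral norm (operator norm w.r.t. Euclidean norms). -/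
noncomputable def specNorm {m n : ℕ} (A : Matrix (Fin m) (Fin n) ℝ) : ℝ :=
  ‖LinearMap.toContinuousLinearMap (Matrix.toEuclideanLin A)‖

/-- Maximum Euclidean row norm. -/
noncomputable def twoInfNorm {m k : ℕ} (U : Matrix (Fin m) (Fin k) ℝ) : ℝ :=
  ⨆ i, Real.sqrt (∑ j, U i j ^ 2)

/-- Max norm: infimum of products of maximum row norms over factorizations. -/
noncomputable def maxNorm {m n : ℕ} (B : Matrix (Fin m) (Fin n) ℝ) : ℝ :=
  sInf {r | ∃ (k : ℕ) (U : Matrix (Fin m) (Fin k) ℝ) (V : Matrix (Fin n) (Fin k) ℝ),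
    B = U * V.transpose ∧ r = twoInfNorm U * twoInfNorm V}

/-- Nuclear norm, via duality with the spectral norm. -/
noncomputable def nucNorm {m n : ℕ} (B : Matrix (Fin m) (Fin n) ℝ) : ℝ :=
  sSup {r | ∃ X : Matrix (Fin m) (Fin n) ℝ, specNorm X ≤ 1 ∧
    r = ∑ i, ∑ j, X i j * B i j}

/-! For a spectral contraction `X` and `B = U Vᵀ`, moving `V` across the pairing and applying
Cauchy–Schwarz gives `⟨X, U Vᵀ⟩ = ⟨U, X V⟩ ≤ ‖U‖_F ‖X V‖_F ≤ ‖U‖_F ‖V‖_F`, and a matrix with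
`m` rows has `‖U‖_F ≤ √m ‖U‖_{2,∞}`. -/

open Matrix

lemma sum_sq_mulVec_le_of_specNorm_le_one {m n : ℕ} {X : Matrix (Fin m) (Fin n) ℝ}
    (hX : specNorm X ≤ 1) (v : Fin n → ℝ) : ∑ i, (X *ᵥ v) i ^ 2 ≤ ∑ j, v j ^ 2 := by
  have hle : ‖toEuclideanLin X (WithLp.toLp 2 v)‖ ≤ ‖WithLp.toLp 2 v‖ :=
    calc ‖toEuclideanLin X (WithLp.toLp 2 v)‖ ≤ specNorm X * ‖WithLp.toLp 2 v‖ :=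
          (LinearMap.toContinuousLinearMap (toEuclideanLin X)).le_opNorm _
      _ ≤ ‖WithLp.toLp 2 v‖ := mul_le_of_le_one_left (norm_nonneg _) hX
  have hsq := pow_le_pow_left₀ (norm_nonneg _) hle 2
  rw [EuclideanSpace.real_norm_sq_eq, EuclideanSpace.real_norm_sq_eq] at hsq
  exact hsq

lemma sum_sq_mul_le_of_specNorm_le_one {m n k : ℕ} {X : Matrix (Fin m) (Fin n) ℝ}
    (hX : specNorm X ≤ 1) (V : Matrix (Fin n) (Fin k) ℝ) :
    ∑ i, ∑ l, (X * V) i l ^ 2 ≤ ∑ j, ∑ l, V j l ^ 2 := by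
  rw [Finset.sum_comm, Finset.sum_comm (f := fun j l => V j l ^ 2)]
  exact Finset.sum_le_sum fun l _ => sum_sq_mulVec_le_of_specNorm_le_one hX (fun j => V j l)

lemma twoInfNorm_nonneg {m k : ℕ} (U : Matrix (Fin m) (Fin k) ℝ) : 0 ≤ twoInfNorm U :=
  Real.iSup_nonneg fun _ => Real.sqrt_nonneg _

lemma sum_sq_row_le_twoInfNorm_sq {m k : ℕ} (U : Matrix (Fin m) (Fin k) ℝ) (i : Fin m) :
    ∑ l, U i l ^ 2 ≤ twoInfNorm U ^ 2 :=
  (Real.sqrt_le_left (twoInfNorm_nonneg U)).mp <|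
    le_ciSup (f := fun i => Real.sqrt (∑ l, U i l ^ 2)) (Set.finite_range _).bddAbove i

lemma sum_sq_le_card_mul_twoInfNorm_sq {m k : ℕ} (U : Matrix (Fin m) (Fin k) ℝ) :
    ∑ i, ∑ l, U i l ^ 2 ≤ m * twoInfNorm U ^ 2 := by
  simpa using Finset.sum_le_sum fun i (_ : i ∈ Finset.univ) => sum_sq_row_le_twoInfNorm_sq U i

lemma sum_sum_mul_mul_transpose {m n κ R : Type*} [Fintype m] [Fintype n] [Fintype κ]
    [CommSemiring R] (X : Matrix m n R) (U : Matrix m κ R) (V : Matrix n κ R) :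
    ∑ i, ∑ j, X i j * (U * Vᵀ) i j = ∑ i, ∑ l, U i l * (X * V) i l := by
  simp only [mul_apply, transpose_apply, Finset.mul_sum]
  refine Finset.sum_congr rfl fun i _ => Finset.sum_comm.trans ?_
  exact Finset.sum_congr rfl fun l _ => Finset.sum_congr rfl fun j _ => by ring

lemma sum_sum_mul_le_sqrt_mul_sqrt {m κ : Type*} [Fintype m] [Fintype κ]
    (U W : Matrix m κ ℝ) :
    ∑ i, ∑ l, U i l * W i l ≤
      Real.sqrt (∑ i, ∑ l, U i l ^ 2) * Real.sqrt (∑ i, ∑ l, W i l ^ 2) := by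
  simpa only [Fintype.sum_prod_type] using
    Real.sum_mul_le_sqrt_mul_sqrt Finset.univ (fun p : m × κ => U p.1 p.2) (fun p => W p.1 p.2)

lemma sum_sum_mul_mul_transpose_le_of_specNorm_le_one {m n k : ℕ}
    {X : Matrix (Fin m) (Fin n) ℝ} (hX : specNorm X ≤ 1)
    (U : Matrix (Fin m) (Fin k) ℝ) (V : Matrix (Fin n) (Fin k) ℝ) :
    ∑ i, ∑ j, X i j * (U * Vᵀ) i j ≤
      Real.sqrt ((m : ℝ) * n) * (twoInfNorm U * twoInfNorm V) :=
  calc ∑ i, ∑ j, X i j * (U * Vᵀ) i j = ∑ i, ∑ l, U i l * (X * V) i l :=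
        sum_sum_mul_mul_transpose X U V
    _ ≤ Real.sqrt (∑ i, ∑ l, U i l ^ 2) * Real.sqrt (∑ i, ∑ l, (X * V) i l ^ 2) :=
        sum_sum_mul_le_sqrt_mul_sqrt U (X * V)
    _ ≤ Real.sqrt (m * twoInfNorm U ^ 2) * Real.sqrt (n * twoInfNorm V ^ 2) := by
        gcongr
        · exact sum_sq_le_card_mul_twoInfNorm_sq U
        · exact (sum_sq_mul_le_of_specNorm_le_one hX V).trans
            (sum_sq_le_card_mul_twoInfNorm_sq V)
    _ = Real.sqrt ((m : ℝ) * n) * (twoInfNorm U * twoInfNorm V) := by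
        rw [Real.sqrt_mul (by positivity), Real.sqrt_mul (by positivity),
          Real.sqrt_mul (by positivity), Real.sqrt_sq (twoInfNorm_nonneg U),
          Real.sqrt_sq (twoInfNorm_nonneg V)]
        ring

lemma specNorm_zero {m n : ℕ} : specNorm (0 : Matrix (Fin m) (Fin n) ℝ) = 0 := by
  simp [specNorm]

lemma nucNorm_le_of_forall_specNorm_le_one {m n : ℕ} {B : Matrix (Fin m) (Fin n) ℝ} {c : ℝ}
    (h : ∀ X : Matrix (Fin m) (Fin n) ℝ, specNorm X ≤ 1 → ∑ i, ∑ j, X i j * B i j ≤ c) :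
    nucNorm B ≤ c :=
  csSup_le ⟨_, 0, specNorm_zero.trans_le zero_le_one, rfl⟩ <| by
    rintro _ ⟨X, hX, rfl⟩
    exact h X hX

lemma le_mul_maxNorm_of_forall_factorization {m n : ℕ} {B : Matrix (Fin m) (Fin n) ℝ}
    {a c : ℝ} (hc : 0 ≤ c)
    (h : ∀ (k : ℕ) (U : Matrix (Fin m) (Fin k) ℝ) (V : Matrix (Fin n) (Fin k) ℝ),
      B = U * Vᵀ → a ≤ c * (twoInfNorm U * twoInfNorm V)) :
    a ≤ c * maxNorm B := by
  rw [maxNorm, ← smul_eq_mul, ← Real.sInf_smul_of_nonneg hc]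
  refine le_csInf (Set.Nonempty.smul_set ⟨_, n, B, 1, by simp, rfl⟩) ?_
  rintro _ ⟨_, ⟨k, U, V, hB, rfl⟩, rfl⟩
  exact h k U V hB

theorem nucNorm_le_sqrt_mul_maxNorm {n₁ n₂ : ℕ}
    (B : Matrix (Fin n₁) (Fin n₂) ℝ) :
    nucNorm B ≤ Real.sqrt ((n₁ : ℝ) * n₂) * maxNorm B := by
  refine le_mul_maxNorm_of_forall_factorization (Real.sqrt_nonneg _) fun k U V hB => ?_
  subst hB
  exact nucNorm_le_of_forall_specNorm_le_one fun X hX =>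
    sum_sum_mul_mul_transpose_le_of_specNorm_le_one hX U V
end
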